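/- arXiv:1909.08065 — 6 statements merged into one kernel-verified Lean document; each statement's English description precedes it below -/
import Mathlib

section
/- If each bad-event B satisfies p(B) ≤ p_max and |Γ̄(B)| ≤ d with e·p_max·d ≤ 1, then the Shearer criterion is satisfied, and moreover α(B) ≤ e for all B ∈ 𝓑. -/
open scoped ENNReal BigOperators Classical

noncomputable section

variable {β : Type*}

/-- A set of bad-events is stable if no two distinct members are dependent. -/
def IsStable (dep : β → β → Prop) (I : Finset β) : Prop :=
  ∀ A ∈ I, ∀ B ∈ I, A ≠ B → ¬ dep A B

/-- Inclusive neighborhood Γ̄(B) = Γ(B) ∪ {B}. -/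
def inclNbhd [Fintype β] (dep : β → β → Prop) (B : β) : Finset β :=
  Finset.univ.filter fun A => A = B ∨ dep A B

/-- Neighborhood Γ(B). -/
def nbhd [Fintype β] (dep : β → β → Prop) (B : β) : Finset β :=
  Finset.univ.filter fun A => A ≠ B ∧ dep A B

/-- stab(I): all stable subsets of ⋃_{B ∈ I} Γ̄(B). -/
def stab [Fintype β] (dep : β → β → Prop) (I : Finset β) : Finset (Finset β) :=
  Finset.univ.filter fun J => IsStable dep J ∧ J ⊆ I.biUnion (inclNbhd dep)

/-- A stable-set sequence rooted at `I`. -/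
structure StableSeq [Fintype β] (dep : β → β → Prop) (I : Finset β) where
  seq : ℕ → Finset β
  root : seq 0 = I
  stable : ∀ i, IsStable dep (seq i)
  step : ∀ i, seq (i + 1) ∈ stab dep (seq i)
  fin : ∃ ℓ, seq ℓ = ∅

/-- The depth of a stable-set sequence: the least ℓ with S_ℓ = ∅. -/
def StableSeq.depth [Fintype β] {dep : β → β → Prop} {I : Finset β}
    (S : StableSeq dep I) : ℕ :=
  Nat.find S.fin

/-- The weight Π_i p(S_i) of a stable-set sequence. -/
def StableSeq.weight [Fintype β] {dep : β → β → Prop} {I : Finset β}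
    (p : β → ℝ≥0∞) (S : StableSeq dep I) : ℝ≥0∞ :=
  ∏ i ∈ Finset.range S.depth, ∏ B ∈ S.seq i, p B

/-- μ(I): total weight of all stable-set sequences rooted at I. -/
def mu [Fintype β] (dep : β → β → Prop) (p : β → ℝ≥0∞) (I : Finset β) : ℝ≥0∞ :=
  ∑' S : StableSeq dep I, S.weight p

/-- μ^{(h)}(I): total weight of stable-set sequences rooted at I of depth ≤ h. -/
def muD [Fintype β] (dep : β → β → Prop) (p : β → ℝ≥0∞) (I : Finset β) (h : ℕ) : ℝ≥0∞ :=
  ∑' S : {S : StableSeq dep I // S.depth ≤ h}, S.1.weight p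

/-- α(B) = Σ_{J ∈ stab(B)} μ(J). -/
def alphaB [Fintype β] (dep : β → β → Prop) (p : β → ℝ≥0∞) (B : β) : ℝ≥0∞ :=
  ∑ J ∈ stab dep {B}, mu dep p J

/-- The Shearer criterion: μ(B) < ∞ for all bad-events B. -/
def ShearerCrit [Fintype β] (dep : β → β → Prop) (p : β → ℝ≥0∞) : Prop :=
  ∀ B : β, mu dep p {B} < ⊤

section Aux

variable [Fintype β] {dep : β → β → Prop}

lemma StableSeq.ext' {I : Finset β} {S T : StableSeq dep I}
    (h : ∀ i, S.seq i = T.seq i) : S = T := by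
  obtain ⟨s1, r1, st1, sp1, f1⟩ := S
  obtain ⟨s2, r2, st2, sp2, f2⟩ := T
  obtain rfl : s1 = s2 := funext h
  rfl

/-- The shifted sequence, rooted at `S.seq 1`. -/
def StableSeq.shift {I : Finset β} (S : StableSeq dep I) : StableSeq dep (S.seq 1) where
  seq i := S.seq (i + 1)
  root := rfl
  stable i := S.stable (i + 1)
  step i := S.step (i + 1)
  fin := by
    obtain ⟨ℓ, hl⟩ := S.fin
    rcases ℓ with _ | n
    · refine ⟨0, ?_⟩
      have h1 := S.step 0
      rw [hl] at h1
      have h2 := (Finset.mem_filter.mp h1).2.2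
      simpa using Finset.subset_empty.mp (by simpa using h2)
    · exact ⟨n, hl⟩

lemma StableSeq.depth_shift {I : Finset β} (S : StableSeq dep I) (hI : I ≠ ∅) :
    S.depth = S.shift.depth + 1 := by
  have hfind : S.seq (S.shift.depth + 1) = ∅ := Nat.find_spec S.shift.fin
  rw [StableSeq.depth, Nat.find_eq_iff]
  refine ⟨hfind, ?_⟩
  intro m hm
  rcases m with _ | k
  · rw [S.root]; exact hI
  · intro hc
    have hk : k < S.shift.depth := by omega
    exact Nat.find_min S.shift.fin hk hc

lemma StableSeq.weight_shift {I : Finset β} (S : StableSeq dep I) (hI : I ≠ ∅)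
    (p : β → ℝ≥0∞) :
    S.weight p = (∏ B ∈ I, p B) * S.shift.weight p := by
  rw [StableSeq.weight, S.depth_shift hI, Finset.prod_range_succ', S.root, mul_comm]
  rfl

lemma stableSeq_empty_seq (S : StableSeq dep (∅ : Finset β)) (i : ℕ) : S.seq i = ∅ := by
  induction i with
  | zero => exact S.root
  | succ n ih =>
    have h1 := S.step n
    rw [ih] at h1
    have h2 := (Finset.mem_filter.mp h1).2.2
    exact Finset.subset_empty.mp (by simpa using h2)

lemma muD_empty_le (p : β → ℝ≥0∞) (h : ℕ) : muD dep p ∅ h ≤ 1 := by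
  rcases isEmpty_or_nonempty {S : StableSeq dep (∅ : Finset β) // S.depth ≤ h} with he | ⟨⟨a⟩⟩
  · rw [muD, tsum_empty]; exact zero_le_one
  · have hs : Subsingleton {S : StableSeq dep (∅ : Finset β) // S.depth ≤ h} :=
      ⟨fun x y => Subtype.ext (StableSeq.ext' fun i => by
        rw [stableSeq_empty_seq x.1, stableSeq_empty_seq y.1])⟩
    rw [muD, tsum_eq_single a (fun b hb => absurd (Subsingleton.elim b a) hb)]
    have hdep : a.1.depth = 0 := (Nat.find_eq_zero a.1.fin).mpr a.1.root
    rw [StableSeq.weight, hdep]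
    simp

lemma muD_succ_le (p : β → ℝ≥0∞) {I : Finset β} (hI : I ≠ ∅) (h : ℕ) :
    muD dep p I (h + 1) ≤ (∏ B ∈ I, p B) * ∑ J ∈ stab dep I, muD dep p J h := by
  classical
  set Φ : {S : StableSeq dep I // S.depth ≤ h + 1} →
      Σ J : {J // J ∈ stab dep I}, {T : StableSeq dep J.1 // T.depth ≤ h} :=
    fun S => ⟨⟨S.1.seq 1, by have := S.1.step 0; rwa [S.1.root] at this⟩,
      ⟨S.1.shift, by have := S.1.depth_shift hI; omega⟩⟩ with hΦdef
  have hΦ : Function.Injective Φ := by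
    intro a b hab
    have hseq : a.1.shift.seq = b.1.shift.seq :=
      congrArg (fun x : Σ J : {J // J ∈ stab dep I},
        {T : StableSeq dep J.1 // T.depth ≤ h} => x.2.1.seq) hab
    refine Subtype.ext (StableSeq.ext' fun i => ?_)
    cases i with
    | zero => rw [a.1.root, b.1.root]
    | succ n => exact congrFun hseq n
  calc muD dep p I (h + 1)
      = ∑' S : {S : StableSeq dep I // S.depth ≤ h + 1},
          (fun x : Σ J : {J // J ∈ stab dep I}, {T : StableSeq dep J.1 // T.depth ≤ h} =>
            (∏ B ∈ I, p B) * x.2.1.weight p) (Φ S) :=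
        tsum_congr fun S => S.1.weight_shift hI p
    _ ≤ ∑' x : Σ J : {J // J ∈ stab dep I}, {T : StableSeq dep J.1 // T.depth ≤ h},
          (∏ B ∈ I, p B) * x.2.1.weight p :=
        ENNReal.tsum_comp_le_tsum_of_injective hΦ _
    _ = ∑' J : {J // J ∈ stab dep I}, ∑' T : {T : StableSeq dep J.1 // T.depth ≤ h},
          (∏ B ∈ I, p B) * T.1.weight p := ENNReal.tsum_sigma' _
    _ = ∑' J : {J // J ∈ stab dep I}, (∏ B ∈ I, p B) * muD dep p J.1 h := by
        refine tsum_congr fun J => ?_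
        rw [ENNReal.tsum_mul_left, muD]
    _ = ∑ J ∈ stab dep I, (∏ B ∈ I, p B) * muD dep p J h :=
        Finset.tsum_subtype (stab dep I) (fun J => (∏ B ∈ I, p B) * muD dep p J h)
    _ = (∏ B ∈ I, p B) * ∑ J ∈ stab dep I, muD dep p J h := by rw [Finset.mul_sum]

lemma muD_le_pow {p : β → ℝ≥0∞} {d : ℕ}
    (hd : ∀ B, (inclNbhd dep B).card ≤ d)
    (hkey : ∀ B, p B * (1 + (d : ℝ≥0∞)⁻¹) ^ d ≤ (d : ℝ≥0∞)⁻¹) :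
    ∀ (h : ℕ) (I : Finset β), muD dep p I h ≤ (d : ℝ≥0∞)⁻¹ ^ I.card := by
  intro h
  induction h with
  | zero =>
    intro I
    rcases eq_or_ne I ∅ with rfl | hI
    · simpa using muD_empty_le p 0
    · have : IsEmpty {S : StableSeq dep I // S.depth ≤ 0} := by
        constructor
        rintro ⟨S, hS⟩
        have h0 : S.seq (Nat.find S.fin) = ∅ := Nat.find_spec S.fin
        rw [show Nat.find S.fin = 0 from Nat.le_zero.mp hS, S.root] at h0
        exact hI h0
      rw [muD, tsum_empty]
      exact zero_le
  | succ h ih =>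
    intro I
    rcases eq_or_ne I ∅ with rfl | hI
    · simpa using muD_empty_le p (h + 1)
    · set c := (d : ℝ≥0∞)⁻¹ with hc
      calc muD dep p I (h + 1)
          ≤ (∏ B ∈ I, p B) * ∑ J ∈ stab dep I, muD dep p J h := muD_succ_le p hI h
        _ ≤ (∏ B ∈ I, p B) * ∑ J ∈ stab dep I, c ^ J.card := by
            gcongr with J hJ
            exact ih J
        _ ≤ (∏ B ∈ I, p B) * ∑ J ∈ (I.biUnion (inclNbhd dep)).powerset, c ^ J.card := by
            gcongr
            intro J hJ
            rw [Finset.mem_powerset]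
            exact (Finset.mem_filter.mp hJ).2.2
        _ = (∏ B ∈ I, p B) * ∏ A ∈ I.biUnion (inclNbhd dep), (c + 1) := by
            congr 1
            rw [Finset.prod_add]
            refine Finset.sum_congr rfl fun t ht => ?_
            simp [Finset.prod_const]
        _ = (∏ B ∈ I, p B) * (1 + c) ^ (I.biUnion (inclNbhd dep)).card := by
            rw [add_comm c 1, Finset.prod_const]
        _ ≤ (∏ B ∈ I, p B) * (1 + c) ^ (∑ B ∈ I, d) := by
            gcongr
            · exact le_self_add
            · exact le_trans Finset.card_biUnion_le
                (Finset.sum_le_sum fun B _ => hd B)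
        _ = ∏ B ∈ I, (p B * (1 + c) ^ d) := by
            rw [← Finset.prod_pow_eq_pow_sum, ← Finset.prod_mul_distrib]
        _ ≤ ∏ B ∈ I, c := Finset.prod_le_prod' fun B _ => hkey B
        _ = c ^ I.card := Finset.prod_const c

lemma mu_le_of_muD_le {p : β → ℝ≥0∞} {I : Finset β} {C : ℝ≥0∞}
    (hC : ∀ h, muD dep p I h ≤ C) : mu dep p I ≤ C := by
  rw [mu, ENNReal.tsum_eq_iSup_sum]
  refine iSup_le fun F => ?_
  refine le_trans ?_ (hC (F.sup StableSeq.depth))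
  calc ∑ S ∈ F, S.weight p
      = ∑ S ∈ F, Set.indicator {S : StableSeq dep I | S.depth ≤ F.sup StableSeq.depth}
          (fun T => T.weight p) S :=
        Finset.sum_congr rfl fun S hS =>
          (Set.indicator_of_mem (show S ∈ {S : StableSeq dep I | S.depth ≤ F.sup StableSeq.depth}
            from Set.mem_setOf_eq ▸ Finset.le_sup (f := StableSeq.depth) hS) (fun T => T.weight p)).symm
    _ ≤ ∑' S : StableSeq dep I, Set.indicator
          {S : StableSeq dep I | S.depth ≤ F.sup StableSeq.depth} (fun T => T.weight p) S :=
        ENNReal.sum_le_tsum F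
    _ = ∑' S : {S : StableSeq dep I // S.depth ≤ F.sup StableSeq.depth}, S.1.weight p :=
        (tsum_subtype _ _).symm
    _ = muD dep p I (F.sup StableSeq.depth) := rfl

end Aux

/-- the symmetric LLL criterion e·p_max·d ≤ 1 implies the Shearer
criterion, and moreover α(B) ≤ e for all bad-events B. -/
theorem symmetric_LLL_implies_Shearer [Fintype β] (dep : β → β → Prop)
    (hsym : Symmetric dep) (p : β → ℝ≥0∞) (pmax : ℝ≥0∞) (d : ℕ)
    (hp : ∀ B, p B ≤ pmax) (hd : ∀ B, (inclNbhd dep B).card ≤ d)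
    (hcrit : ENNReal.ofReal (Real.exp 1) * pmax * (d : ℝ≥0∞) ≤ 1) :
    ShearerCrit dep p ∧ ∀ B : β, alphaB dep p B ≤ ENNReal.ofReal (Real.exp 1) := by
  rcases isEmpty_or_nonempty β with hE | hN
  · exact ⟨fun B => isEmptyElim B, fun B => isEmptyElim B⟩
  · obtain ⟨B₀⟩ := hN
    have hd1 : 1 ≤ d := by
      refine le_trans ?_ (hd B₀)
      refine Finset.card_pos.mpr ⟨B₀, ?_⟩
      simp [inclNbhd]
    have hd0 : (d : ℝ≥0∞) ≠ 0 := by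
      simp only [ne_eq, Nat.cast_eq_zero]
      omega
    have hdT : (d : ℝ≥0∞) ≠ ⊤ := ENNReal.natCast_ne_top d
    set c : ℝ≥0∞ := (d : ℝ≥0∞)⁻¹ with hc
    have hdR : (0 : ℝ) < d := by exact_mod_cast hd1
    have hexp : ((1 : ℝ≥0∞) + c) ^ d ≤ ENNReal.ofReal (Real.exp 1) := by
      have h1 : (1 : ℝ≥0∞) + c = ENNReal.ofReal (1 + (d : ℝ)⁻¹) := by
        rw [ENNReal.ofReal_add one_pos.le (by positivity), ENNReal.ofReal_one, hc]
        congr 1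
        rw [ENNReal.ofReal_inv_of_pos hdR, ENNReal.ofReal_natCast]
      rw [h1, ← ENNReal.ofReal_pow (by positivity)]
      apply ENNReal.ofReal_le_ofReal
      have h2 : (1 + (d : ℝ)⁻¹) ≤ Real.exp ((d : ℝ)⁻¹) := by
        have := Real.add_one_le_exp ((d : ℝ)⁻¹)
        linarith
      calc (1 + (d : ℝ)⁻¹) ^ d ≤ Real.exp ((d : ℝ)⁻¹) ^ d := by
            apply pow_le_pow_left₀ (by positivity) h2
        _ = Real.exp ((d : ℝ) * (d : ℝ)⁻¹) := (Real.exp_nat_mul _ d).symm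
        _ = Real.exp 1 := by rw [mul_inv_cancel₀ (ne_of_gt hdR)]
    have hkey : ∀ B, p B * (1 + c) ^ d ≤ c := by
      intro B
      have hmul : p B * (1 + c) ^ d * d ≤ 1 := by
        calc p B * (1 + c) ^ d * d ≤ pmax * ENNReal.ofReal (Real.exp 1) * d := by
              gcongr
              exact hp B
          _ = ENNReal.ofReal (Real.exp 1) * pmax * d := by ring
          _ ≤ 1 := hcrit
      have := (ENNReal.le_div_iff_mul_le (Or.inl hd0) (Or.inl hdT)).mpr hmul
      rwa [one_div] at this
    have hmu : ∀ I : Finset β, mu dep p I ≤ c ^ I.card :=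
      fun I => mu_le_of_muD_le fun h => muD_le_pow hd hkey h I
    constructor
    · intro B
      calc mu dep p {B} ≤ c ^ ({B} : Finset β).card := hmu _
        _ = c := by simp
        _ < ⊤ := ENNReal.inv_lt_top.mpr (by positivity)
    · intro B
      calc alphaB dep p B = ∑ J ∈ stab dep {B}, mu dep p J := rfl
        _ ≤ ∑ J ∈ stab dep {B}, c ^ J.card := Finset.sum_le_sum fun J _ => hmu J
        _ ≤ ∑ J ∈ (inclNbhd dep B).powerset, c ^ J.card := by
            apply Finset.sum_le_sum_of_subset
            intro J hJ
            rw [Finset.mem_powerset]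
            have h3 := (Finset.mem_filter.mp hJ).2.2
            rwa [Finset.singleton_biUnion] at h3
        _ = ∏ A ∈ inclNbhd dep B, (c + 1) := by
            rw [Finset.prod_add]
            refine Finset.sum_congr rfl fun t ht => ?_
            simp [Finset.prod_const]
        _ = (1 + c) ^ (inclNbhd dep B).card := by rw [add_comm c 1, Finset.prod_const]
        _ ≤ (1 + c) ^ d := pow_le_pow_right₀ le_self_add (hd B)
        _ ≤ ENNReal.ofReal (Real.exp 1) := hexp
end
end

section
/- If p^{1−ε} satisfies the Shearer criterion for ε ∈ (0,1), then the vector q = p^{1−ε/2} satisfies Shearer with ε/2-exponential slack (i.e., q^{1−ε/2} satisfies Shearer) and with ε/(2g)-multiplicative slack (i.e., (1+ε/(2g))·q satisfies Shearer), where g = 1/(1 − p_max). -/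
open scoped ENNReal BigOperators Classical

noncomputable section

variable {β : Type*}

lemma mu_mono [Fintype β] (dep : β → β → Prop) (r r' : β → ℝ≥0∞)
    (h : ∀ B, r B ≤ r' B) (I : Finset β) : mu dep r I ≤ mu dep r' I := by
  refine ENNReal.tsum_le_tsum fun S => ?_
  refine Finset.prod_le_prod' fun i _ => Finset.prod_le_prod' fun B _ => h B

lemma shearer_mono [Fintype β] (dep : β → β → Prop) (r r' : β → ℝ≥0∞)
    (h : ∀ B, r B ≤ r' B) (h' : ShearerCrit dep r') : ShearerCrit dep r :=
  fun B => lt_of_le_of_lt (mu_mono dep r r' h {B}) (h' B)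

lemma key_real (x t : ℝ) (hx0 : 0 ≤ x) (hx1 : x ≤ 1) (ht0 : 0 ≤ t) (ht1 : t ≤ 1) :
    x ^ t * (1 + t * (1 - x)) ≤ 1 := by
  have hb : x ^ t ≤ 1 + t * (x - 1) := by
    have := rpow_one_add_le_one_add_mul_self (by linarith : (-1:ℝ) ≤ x - 1) ht0 ht1
    simpa using this
  have h1 : 1 + t * (x - 1) = 1 - t * (1 - x) := by ring
  have hnn : 0 ≤ x ^ t := Real.rpow_nonneg hx0 t
  have h2 : (1 - t * (1 - x)) * (1 + t * (1 - x)) ≤ 1 := by nlinarith [sq_nonneg (t * (1 - x))]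
  have h3 : 0 ≤ 1 + t * (1 - x) := by nlinarith
  calc x ^ t * (1 + t * (1 - x)) ≤ (1 - t * (1 - x)) * (1 + t * (1 - x)) := by
        apply mul_le_mul_of_nonneg_right _ h3; rw [← h1]; exact hb
    _ ≤ 1 := h2

/-- if p^{1-ε} satisfies the Shearer criterion for ε ∈ (0,1), then
q = p^{1-ε/2} satisfies Shearer with ε/2-exponential slack and with
ε/(2g)-multiplicative slack, where g = 1/(1-p_max). -/
theorem exponential_slack_transfer [Fintype β] (dep : β → β → Prop)
    (hsym : Symmetric dep) (p : β → ℝ≥0∞) (ε pm : ℝ)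
    (hε : 0 < ε ∧ ε < 1) (hpm : 0 ≤ pm ∧ pm < 1)
    (hp : ∀ B, p B ≤ ENNReal.ofReal pm) (hmax : ∃ B, p B = ENNReal.ofReal pm)
    (hShearer : ShearerCrit dep (fun B => p B ^ ((1 : ℝ) - ε))) :
    ShearerCrit dep (fun B => (p B ^ ((1 : ℝ) - ε / 2)) ^ ((1 : ℝ) - ε / 2)) ∧
      ShearerCrit dep
        (fun B => (1 + ENNReal.ofReal (ε / (2 * (1 / (1 - pm))))) *
          p B ^ ((1 : ℝ) - ε / 2)) := by
  obtain ⟨hε0, hε1⟩ := hε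
  obtain ⟨hpm0, hpm1⟩ := hpm
  have hple1 : ∀ B, p B ≤ 1 := fun B =>
    (hp B).trans (by simpa using ENNReal.ofReal_le_one.2 hpm1.le)
  constructor
  · refine shearer_mono dep _ _ (fun B => ?_) hShearer
    rw [← ENNReal.rpow_mul]
    exact ENNReal.rpow_le_rpow_of_exponent_ge (hple1 B) (by nlinarith)
  · refine shearer_mono dep _ _ (fun B => ?_) hShearer
    have hpt : p B ≠ ⊤ := ((hp B).trans_lt ENNReal.ofReal_lt_top).ne
    rcases eq_or_ne (p B) 0 with h0 | h0
    · rw [h0, ENNReal.zero_rpow_of_pos (by linarith), ENNReal.zero_rpow_of_pos (by linarith),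
        mul_zero]
    · have hsplit : p B ^ ((1 : ℝ) - ε / 2) = p B ^ ((1 : ℝ) - ε) * p B ^ (ε / 2) := by
        rw [← ENNReal.rpow_add _ _ h0 hpt]; ring_nf
      rw [hsplit, ← mul_assoc, mul_comm (1 + ENNReal.ofReal (ε / (2 * (1 / (1 - pm)))))
        (p B ^ ((1 : ℝ) - ε)), mul_assoc]
      have hkey : (1 + ENNReal.ofReal (ε / (2 * (1 / (1 - pm))))) * p B ^ (ε / 2) ≤ 1 := by
        have hc : ε / (2 * (1 / (1 - pm))) = (ε / 2) * (1 - pm) := by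
          field_simp
        have h1 : p B ^ (ε / 2) ≤ ENNReal.ofReal (pm ^ (ε / 2)) := by
          rw [← ENNReal.ofReal_rpow_of_nonneg hpm0 (by linarith)]
          exact ENNReal.rpow_le_rpow (hp B) (by linarith)
        calc (1 + ENNReal.ofReal (ε / (2 * (1 / (1 - pm))))) * p B ^ (ε / 2)
            ≤ (1 + ENNReal.ofReal ((ε / 2) * (1 - pm))) * ENNReal.ofReal (pm ^ (ε / 2)) := by
              rw [hc]; exact mul_le_mul_right h1 _
          _ = ENNReal.ofReal ((1 + (ε / 2) * (1 - pm)) * pm ^ (ε / 2)) := by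
              rw [← ENNReal.ofReal_one, ← ENNReal.ofReal_add (by norm_num) (by nlinarith),
                ← ENNReal.ofReal_mul (by nlinarith)]
          _ ≤ 1 := by
              rw [← ENNReal.ofReal_one]
              apply ENNReal.ofReal_le_ofReal
              have := key_real pm (ε / 2) hpm0 hpm1.le (by linarith) (by linarith)
              nlinarith [this]
      calc p B ^ ((1 : ℝ) - ε) * ((1 + ENNReal.ofReal (ε / (2 * (1 / (1 - pm))))) * p B ^ (ε / 2))
          ≤ p B ^ ((1 : ℝ) - ε) * 1 := mul_le_mul_right hkey _
        _ = p B ^ ((1 : ℝ) - ε) := mul_one _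
end
end

section
/- If a witness DAG G is compatible with a resampling table R and H is a prefix of G, then H is compatible with R. -/
open scoped ENNReal BigOperators Classical

noncomputable section

variable {β : Type*}

/-- A witness DAG over bad-events β with dependency relation `dep`: a finite
acyclic labeled digraph in which two distinct vertices are joined by an edge
(in one direction or the other) iff their labels are dependent. Vertices are
drawn from ℕ. -/
structure WDag (β : Type*) (dep : β → β → Prop) where
  verts : Finset ℕ
  Edge : ℕ → ℕ → Prop
  label : ℕ → β
  support : ∀ u v, Edge u v → u ∈ verts ∧ v ∈ verts
  acyclic : ∀ v, ¬ Relation.TransGen Edge v v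
  edge_iff : ∀ u ∈ verts, ∀ v ∈ verts, u ≠ v →
    ((Edge u v ∨ Edge v u) ↔ dep (label u) (label v))

namespace WDag

variable {dep : β → β → Prop}

/-- depth(G): the maximum length of a directed path in G. -/
def depth (G : WDag β dep) : ℕ :=
  sSup {n | ∃ l : List ℕ, (∀ x ∈ l, x ∈ G.verts) ∧ l.Chain' G.Edge ∧ l.length = n}

/-- v is a sink node of G. -/
def IsSink (G : WDag β dep) (v : ℕ) : Prop :=
  v ∈ G.verts ∧ ∀ w, ¬ G.Edge v w

/-- G has exactly one sink node. -/
def SingleSink (G : WDag β dep) : Prop := ∃! v, G.IsSink v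

/-- H is a prefix of G: an induced subgraph closed under taking in-neighbors
(equivalently, H = G(U), the set of vertices with a directed path into U, for
some vertex set U). -/
def IsPrefix (H G : WDag β dep) : Prop :=
  H.verts ⊆ G.verts ∧ (∀ v ∈ H.verts, H.label v = G.label v) ∧
    (∀ u v, H.Edge u v ↔ (G.Edge u v ∧ u ∈ H.verts ∧ v ∈ H.verts)) ∧
    (∀ u v, G.Edge u v → v ∈ H.verts → u ∈ H.verts)

end WDag

namespace WDag

variable {dep : β → β → Prop}

/-- The number of vertices u of G with i ∈ var(L(u)) and a directed path from
u to v (including v itself). -/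
def ancCount {ι : Type*} (G : WDag β dep) (var : β → Finset ι) (v : ℕ) (i : ι) : ℕ :=
  (G.verts.filter fun u => i ∈ var (G.label u) ∧ Relation.ReflTransGen G.Edge u v).card

/-- The configuration X_{v,R} ∈ Σ^n associated to a vertex v of G and a
resampling table R. -/
def config {ι σα : Type*} (G : WDag β dep) (var : β → Finset ι)
    (R : ι → ℕ → σα) (v : ℕ) : ι → σα :=
  fun i => R i (G.ancCount var v i - 1)

/-- G is compatible with the resampling table R: for every vertex v, the event
labeling v holds on the configuration X_{v,R}. -/
def Compatible {ι σα : Type*} (G : WDag β dep) (var : β → Finset ι)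
    (f : β → (ι → σα) → Prop) (R : ι → ℕ → σα) : Prop :=
  ∀ v ∈ G.verts, f (G.label v) (G.config var R v)

end WDag

namespace WDag.IsPrefix

variable {dep : β → β → Prop} {H G : WDag β dep}

theorem verts_subset (h : H.IsPrefix G) : H.verts ⊆ G.verts :=
  h.1

theorem label_eq (h : H.IsPrefix G) {v : ℕ} (hv : v ∈ H.verts) : H.label v = G.label v :=
  h.2.1 v hv

theorem edge_iff (h : H.IsPrefix G) {u v : ℕ} :
    H.Edge u v ↔ G.Edge u v ∧ u ∈ H.verts ∧ v ∈ H.verts :=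
  h.2.2.1 u v

theorem mem_of_edge (h : H.IsPrefix G) {u v : ℕ} (huv : G.Edge u v) (hv : v ∈ H.verts) :
    u ∈ H.verts :=
  h.2.2.2 u v huv hv

theorem reflTransGen_mono (h : H.IsPrefix G) {u v : ℕ}
    (huv : Relation.ReflTransGen H.Edge u v) : Relation.ReflTransGen G.Edge u v :=
  Relation.ReflTransGen.mono (fun _ _ e => (h.edge_iff.1 e).1) _ _ huv

theorem reflTransGen_of_reflTransGen_of_mem (h : H.IsPrefix G) {u v : ℕ} (hv : v ∈ H.verts)
    (huv : Relation.ReflTransGen G.Edge u v) :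
    u ∈ H.verts ∧ Relation.ReflTransGen H.Edge u v := by
  induction huv using Relation.ReflTransGen.head_induction_on with
  | refl => exact ⟨hv, .refl⟩
  | head e _ ih =>
    obtain ⟨hw, hwv⟩ := ih
    have hu := h.mem_of_edge e hw
    exact ⟨hu, .head (h.edge_iff.2 ⟨e, hu, hw⟩) hwv⟩

theorem ancCount_eq {ι : Type*} (h : H.IsPrefix G) (var : β → Finset ι) {v : ℕ}
    (hv : v ∈ H.verts) : H.ancCount var v = G.ancCount var v := by
  funext i
  unfold WDag.ancCount
  congr 1
  ext u
  simp only [Finset.mem_filter]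
  constructor
  · rintro ⟨hu, hi, huv⟩
    exact ⟨h.verts_subset hu, h.label_eq hu ▸ hi, h.reflTransGen_mono huv⟩
  · rintro ⟨-, hi, huv⟩
    obtain ⟨hu, huv⟩ := h.reflTransGen_of_reflTransGen_of_mem hv huv
    exact ⟨hu, (h.label_eq hu).symm ▸ hi, huv⟩

theorem config_eq {ι σα : Type*} (h : H.IsPrefix G) (var : β → Finset ι) (R : ι → ℕ → σα)
    {v : ℕ} (hv : v ∈ H.verts) : H.config var R v = G.config var R v := by
  unfold WDag.config
  rw [h.ancCount_eq var hv]

end WDag.IsPrefix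

/-- compatibility with a resampling table is inherited by
prefixes. -/
theorem prefix_compatible {ι σα : Type*} (dep : β → β → Prop)
    (var : β → Finset ι) (f : β → (ι → σα) → Prop) (R : ι → ℕ → σα)
    (G H : WDag β dep) (hG : G.Compatible var f R) (hpre : H.IsPrefix G) :
    H.Compatible var f R := by
  intro v hv
  rw [hpre.label_eq hv, hpre.config_eq var R hv]
  exact hG v (hpre.verts_subset hv)
end
end

section
/- Let q = p^{1−ε} for ε ∈ (0,1/2) and τ ∈ (0,1/2). If G is a collectible witness DAG with w_q(G) < τ, more than one sink node, and w_q(H) ≥ τ for every collectible strict prefix H of G, then w_q(G) ≥ τ². -/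
open scoped ENNReal BigOperators Classical

noncomputable section

variable {β : Type*}

namespace WDag

variable {dep : β → β → Prop}

/-- The weight w_q(G) = Π_{v ∈ G} q(L(v)). -/
def wt (G : WDag β dep) (q : β → ℝ≥0∞) : ℝ≥0∞ :=
  ∏ v ∈ G.verts, q (G.label v)

/-- sink(G): the (stable) set of labels of sink nodes. -/
def sinkSet (G : WDag β dep) : Finset β :=
  (G.verts.filter fun v => ∀ w, ¬ G.Edge v w).image G.label

/-- G is collectible: sink(G) ∈ stab(B) for some bad-event B. -/
def Collectible [Fintype β] (G : WDag β dep) : Prop :=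
  ∃ B : β, G.sinkSet ∈ stab dep {B}

end WDag

/-- Membership in 𝔉¹_τ: a collectible wdag G with w_{p^{1-ε}}(G) < τ all of
whose collectible strict prefixes H satisfy w_{p^{1-ε}}(H) ≥ τ. -/
def memF1 [Fintype β] (dep : β → β → Prop) (p : β → ℝ≥0∞) (ε τ : ℝ)
    (G : WDag β dep) : Prop :=
  G.Collectible ∧ G.wt (fun B => p B ^ ((1 : ℝ) - ε)) < ENNReal.ofReal τ ∧
    ∀ H : WDag β dep, H.IsPrefix G → H.verts ≠ G.verts → H.Collectible →
      ENNReal.ofReal τ ≤ H.wt (fun B => p B ^ ((1 : ℝ) - ε))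

/-! ### Auxiliary machinery for the proof -/

namespace WDagAux

variable {dep : β → β → Prop}

/-- Vertices of `G` having a directed path into `U`. -/
def genVerts (G : WDag β dep) (U : Finset ℕ) : Finset ℕ :=
  G.verts.filter fun u => ∃ v ∈ U, Relation.ReflTransGen G.Edge u v

lemma mem_genVerts {G : WDag β dep} {U : Finset ℕ} {u : ℕ} :
    u ∈ genVerts G U ↔ u ∈ G.verts ∧ ∃ v ∈ U, Relation.ReflTransGen G.Edge u v := by
  simp [genVerts]

/-- The prefix of `G` generated by a vertex set `U`. -/
def gen (G : WDag β dep) (U : Finset ℕ) : WDag β dep where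
  verts := genVerts G U
  Edge u v := G.Edge u v ∧ u ∈ genVerts G U ∧ v ∈ genVerts G U
  label := G.label
  support := fun _ _ h => ⟨h.2.1, h.2.2⟩
  acyclic := fun v h => G.acyclic v (Relation.TransGen.mono (fun _ _ hab => hab.1) v v h)
  edge_iff := by
    intro u hu v hv hne
    constructor
    · rintro (h | h)
      · exact ((G.edge_iff u (mem_genVerts.mp hu).1 v (mem_genVerts.mp hv).1 hne)).mp
          (Or.inl h.1)
      · exact ((G.edge_iff u (mem_genVerts.mp hu).1 v (mem_genVerts.mp hv).1 hne)).mp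
          (Or.inr h.1)
    · intro h
      rcases (G.edge_iff u (mem_genVerts.mp hu).1 v (mem_genVerts.mp hv).1 hne).mpr h with
        h' | h'
      · exact Or.inl ⟨h', hu, hv⟩
      · exact Or.inr ⟨h', hv, hu⟩

lemma gen_isPrefix (G : WDag β dep) (U : Finset ℕ) : (gen G U).IsPrefix G := by
  refine ⟨Finset.filter_subset _ _, fun v _ => rfl, fun u v => Iff.rfl, ?_⟩
  intro u v huv hv
  rcases mem_genVerts.mp hv with ⟨hvG, w, hwU, hpath⟩
  exact mem_genVerts.mpr ⟨(G.support u v huv).1, w, hwU, hpath.head huv⟩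

/-- Every vertex of a wdag has a directed path to a sink. -/
lemma reach_sink_aux (G : WDag β dep) :
    ∀ n u, u ∈ G.verts → (G.verts.filter fun v => Relation.TransGen G.Edge u v).card ≤ n →
      ∃ v, v ∈ G.verts ∧ (∀ w, ¬ G.Edge v w) ∧ Relation.ReflTransGen G.Edge u v := by
  intro n
  induction n with
  | zero =>
    intro u hu hcard
    by_cases hs : ∀ w, ¬ G.Edge u w
    · exact ⟨u, hu, hs, Relation.ReflTransGen.refl⟩
    · push_neg at hs
      rcases hs with ⟨w, hw⟩
      have hwmem : w ∈ G.verts.filter fun v => Relation.TransGen G.Edge u v :=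
        Finset.mem_filter.mpr ⟨(G.support u w hw).2, Relation.TransGen.single hw⟩
      have : 0 < (G.verts.filter fun v => Relation.TransGen G.Edge u v).card :=
        Finset.card_pos.mpr ⟨w, hwmem⟩
      omega
  | succ n ih =>
    intro u hu hcard
    by_cases hs : ∀ w, ¬ G.Edge u w
    · exact ⟨u, hu, hs, Relation.ReflTransGen.refl⟩
    · push_neg at hs
      rcases hs with ⟨w, hw⟩
      have hwG : w ∈ G.verts := (G.support u w hw).2
      have hsub : (G.verts.filter fun v => Relation.TransGen G.Edge w v) ⊆
          (G.verts.filter fun v => Relation.TransGen G.Edge u v) := by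
        intro x hx
        rcases Finset.mem_filter.mp hx with ⟨hxG, hxt⟩
        exact Finset.mem_filter.mpr ⟨hxG, hxt.head hw⟩
      have hwmem : w ∈ G.verts.filter fun v => Relation.TransGen G.Edge u v :=
        Finset.mem_filter.mpr ⟨hwG, Relation.TransGen.single hw⟩
      have hwnot : w ∉ G.verts.filter fun v => Relation.TransGen G.Edge w v := by
        intro hmem
        exact G.acyclic w (Finset.mem_filter.mp hmem).2
      have hlt : (G.verts.filter fun v => Relation.TransGen G.Edge w v).card <
          (G.verts.filter fun v => Relation.TransGen G.Edge u v).card :=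
        Finset.card_lt_card (Finset.ssubset_iff_of_subset hsub |>.mpr ⟨w, hwmem, hwnot⟩)
      rcases ih w hwG (by omega) with ⟨v, hvG, hvs, hpath⟩
      exact ⟨v, hvG, hvs, hpath.head hw⟩

lemma reach_sink (G : WDag β dep) {u : ℕ} (hu : u ∈ G.verts) :
    ∃ v ∈ G.verts.filter fun v => ∀ w, ¬ G.Edge v w, Relation.ReflTransGen G.Edge u v := by
  rcases reach_sink_aux G _ u hu le_rfl with ⟨v, hvG, hvs, hpath⟩
  exact ⟨v, Finset.mem_filter.mpr ⟨hvG, hvs⟩, hpath⟩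

/-- A sink can only reach itself. -/
lemma sink_reach_self {G : WDag β dep} {v w : ℕ} (hs : ∀ x, ¬ G.Edge v x)
    (h : Relation.ReflTransGen G.Edge v w) : v = w := by
  rcases h.cases_head with h | ⟨c, hc, _⟩
  · exact h
  · exact absurd hc (hs c)

/-- Sinks of `gen G U`, when `U` consists of sinks of `G`. -/
lemma gen_sink_filter {G : WDag β dep} {U : Finset ℕ}
    (hU : U ⊆ G.verts.filter fun v => ∀ w, ¬ G.Edge v w) :
    ((gen G U).verts.filter fun v => ∀ w, ¬ (gen G U).Edge v w) = U := by
  ext u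
  simp only [Finset.mem_filter]
  constructor
  · rintro ⟨hu, hsink⟩
    rcases mem_genVerts.mp hu with ⟨huG, v, hvU, hpath⟩
    rcases hpath.cases_head with rfl | ⟨c, hc, hcpath⟩
    · exact hvU
    · exfalso
      have hcmem : c ∈ genVerts G U :=
        mem_genVerts.mpr ⟨(G.support u c hc).2, v, hvU, hcpath⟩
      exact hsink c ⟨hc, hu, hcmem⟩
  · intro huU
    have huG : u ∈ G.verts := (Finset.mem_filter.mp (hU huU)).1
    have hsink : ∀ w, ¬ G.Edge u w := (Finset.mem_filter.mp (hU huU)).2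
    refine ⟨mem_genVerts.mpr ⟨huG, u, huU, Relation.ReflTransGen.refl⟩, ?_⟩
    intro w hw
    exact hsink w hw.1

/-- `stab` is downward closed. -/
lemma stab_mono [Fintype β] {J J' : Finset β} {I : Finset β}
    (hsub : J' ⊆ J) (hJ : J ∈ stab dep I) : J' ∈ stab dep I := by
  rcases Finset.mem_filter.mp hJ with ⟨_, hstable, hcover⟩
  refine Finset.mem_filter.mpr ⟨Finset.mem_univ _, ?_, hsub.trans hcover⟩
  intro A hA B hB hne
  exact hstable A (hsub hA) B (hsub hB) hne

/-- `gen G U` is collectible when `U` is a nonempty set of sinks of `G` and `G`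
is collectible. -/
lemma gen_collectible [Fintype β] {G : WDag β dep} {U : Finset ℕ}
    (hU : U ⊆ G.verts.filter fun v => ∀ w, ¬ G.Edge v w)
    (hcol : G.Collectible) : (gen G U).Collectible := by
  rcases hcol with ⟨B, hB⟩
  refine ⟨B, stab_mono ?_ hB⟩
  rw [WDag.sinkSet, gen_sink_filter hU]
  exact Finset.image_subset_image hU

/-- A sink not in `U` is not in `genVerts G U`. -/
lemma sink_not_mem_genVerts {G : WDag β dep} {U : Finset ℕ} {v : ℕ}
    (hs : ∀ w, ¬ G.Edge v w) (hv : v ∉ U) : v ∉ genVerts G U := by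
  intro hmem
  rcases mem_genVerts.mp hmem with ⟨_, w, hwU, hpath⟩
  exact hv (sink_reach_self hs hpath ▸ hwU)

end WDagAux

/-- if G is collectible with more than one sink node,
w_q(G) < τ, and every collectible strict prefix H of G has w_q(H) ≥ τ (where
q = p^{1-ε}), then w_q(G) ≥ τ². -/
theorem multi_sink_weight_lower_bound [Fintype β] (dep : β → β → Prop)
    (hsym : Symmetric dep) (p : β → ℝ≥0∞) (hp : ∀ B, p B ≤ 1) (ε τ : ℝ)
    (hε : 0 < ε ∧ ε < 1 / 2) (hτ : 0 < τ ∧ τ < 1 / 2)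
    (G : WDag β dep) (hcol : G.Collectible)
    (hw : G.wt (fun B => p B ^ ((1 : ℝ) - ε)) < ENNReal.ofReal τ)
    (hsinks : 1 < (G.verts.filter fun v => ∀ w, ¬ G.Edge v w).card)
    (hpre : ∀ H : WDag β dep, H.IsPrefix G → H.verts ≠ G.verts → H.Collectible →
      ENNReal.ofReal τ ≤ H.wt (fun B => p B ^ ((1 : ℝ) - ε))) :
    ENNReal.ofReal τ * ENNReal.ofReal τ ≤ G.wt (fun B => p B ^ ((1 : ℝ) - ε)) := by
  classical
  set q : β → ℝ≥0∞ := fun B => p B ^ ((1 : ℝ) - ε) with hq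
  set S : Finset ℕ := G.verts.filter fun v => ∀ w, ¬ G.Edge v w with hS
  obtain ⟨v₁, hv₁S, v₂, hv₂S, hne⟩ := Finset.one_lt_card.mp hsinks
  have hv₁sink : ∀ w, ¬ G.Edge v₁ w := (Finset.mem_filter.mp hv₁S).2
  have hv₁G : v₁ ∈ G.verts := (Finset.mem_filter.mp hv₁S).1
  have hv₂G : v₂ ∈ G.verts := (Finset.mem_filter.mp hv₂S).1
  set U₁ : Finset ℕ := {v₁} with hU₁
  set U₂ : Finset ℕ := S.erase v₁ with hU₂
  have hU₁sub : U₁ ⊆ S := Finset.singleton_subset_iff.mpr hv₁S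
  have hU₂sub : U₂ ⊆ S := Finset.erase_subset _ _
  set H₁ := WDagAux.gen G U₁ with hH₁
  set H₂ := WDagAux.gen G U₂ with hH₂
  -- H₁ is a strict collectible prefix
  have hv₂U₂ : v₂ ∈ U₂ := Finset.mem_erase.mpr ⟨hne.symm, hv₂S⟩
  have h₁ne : H₁.verts ≠ G.verts := by
    intro h
    have : v₂ ∉ H₁.verts :=
      WDagAux.sink_not_mem_genVerts (Finset.mem_filter.mp hv₂S).2
        (by simp [hU₁, hne.symm])
    rw [h] at this; exact this hv₂G
  have h₂ne : H₂.verts ≠ G.verts := by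
    intro h
    have : v₁ ∉ H₂.verts :=
      WDagAux.sink_not_mem_genVerts hv₁sink (Finset.notMem_erase _ _)
    rw [h] at this; exact this hv₁G
  have hwt₁ : ENNReal.ofReal τ ≤ H₁.wt q :=
    hpre H₁ (WDagAux.gen_isPrefix G U₁) h₁ne (WDagAux.gen_collectible hU₁sub hcol)
  have hwt₂ : ENNReal.ofReal τ ≤ H₂.wt q :=
    hpre H₂ (WDagAux.gen_isPrefix G U₂) h₂ne (WDagAux.gen_collectible hU₂sub hcol)
  -- H₁.verts ∪ H₂.verts = G.verts
  have hcover : H₁.verts ∪ H₂.verts = G.verts := by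
    apply Finset.Subset.antisymm
    · intro u hu
      rcases Finset.mem_union.mp hu with h | h
      · exact (Finset.mem_filter.mp h).1
      · exact (Finset.mem_filter.mp h).1
    · intro u hu
      rcases WDagAux.reach_sink G hu with ⟨v, hvS, hpath⟩
      by_cases hv : v = v₁
      · exact Finset.mem_union_left _
          (WDagAux.mem_genVerts.mpr ⟨hu, v, by simp [hU₁, hv], hpath⟩)
      · exact Finset.mem_union_right _
          (WDagAux.mem_genVerts.mpr ⟨hu, v, Finset.mem_erase.mpr ⟨hv, hvS⟩, hpath⟩)
  -- q is pointwise ≤ 1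
  have hq1 : ∀ B, q B ≤ 1 := fun B =>
    ENNReal.rpow_le_one (hp B) (by linarith [hε.2])
  calc ENNReal.ofReal τ * ENNReal.ofReal τ
      ≤ H₁.wt q * H₂.wt q := mul_le_mul' hwt₁ hwt₂
    _ = (∏ v ∈ H₁.verts, q (G.label v)) * ∏ v ∈ H₂.verts, q (G.label v) := rfl
    _ = (∏ v ∈ H₁.verts ∪ H₂.verts, q (G.label v)) *
          ∏ v ∈ H₁.verts ∩ H₂.verts, q (G.label v) :=
        (Finset.prod_union_inter).symm
    _ ≤ (∏ v ∈ H₁.verts ∪ H₂.verts, q (G.label v)) * 1 := by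
        gcongr
        exact Finset.prod_le_one' fun v _ => hq1 _
    _ = G.wt q := by rw [mul_one, hcover]; rfl
end
end

section
/- Let 𝔉¹_τ be the set of collectible witness DAGs G with w_{p^{1−ε}}(G) < τ and w_{p^{1−ε}}(H) ≥ τ for all collectible strict prefixes H of G. Then w(𝔉¹_τ) ≤ τ^ε · W_ε, where w(𝔉¹_τ) = Σ_{G ∈ 𝔉¹_τ} w(G), W_ε = Σ_B α_{p^{1−ε}}(B), and ε ∈ (0,1/2), τ ∈ (0,1/2). -/
open scoped ENNReal BigOperators Classical

noncomputable section

variable {β : Type*}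

/-- Isomorphism of witness DAGs: a bijection of the vertex sets preserving
labels and edges. -/
def WDag.Iso {dep : β → β → Prop} (G H : WDag β dep) : Prop :=
  ∃ e : ℕ → ℕ, Set.BijOn e ↑G.verts ↑H.verts ∧
    (∀ v ∈ G.verts, H.label (e v) = G.label v) ∧
    (∀ u ∈ G.verts, ∀ v ∈ G.verts, (G.Edge u v ↔ H.Edge (e u) (e v)))

/-! For `G ∈ 𝔉¹_τ` and `q = p ^ (1 - ε)` one has `w(G) ≤ w_q(G) < τ`, hence
`w(G) = w(G) ^ ε · w_q(G) ≤ τ ^ ε · w_q(G)`. Grading the vertices of a wdag by the length of a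
longest path to a sink (equally labelled vertices being ordered among themselves) turns it into a
stable-set sequence rooted at its sink set, of the same `q`-weight, from which the wdag is
recovered up to isomorphism. So pairwise non-isomorphic wdags with sink set `J` have total
`q`-weight at most `μ_q(J)`, and collectible ones at most `Σ_B α_q(B)`. -/

namespace Relation

variable {α : Type*} {R : α → α → Prop}

theorem exists_forall_not_rel_of_acyclic (hacyc : ∀ v, ¬ TransGen R v v) {S : Finset α}
    (hS : S.Nonempty) : ∃ v ∈ S, ∀ u ∈ S, ¬ R v u := by
  let r : S → S → Prop := fun x y => TransGen R y x
  have : IsTrans S r := ⟨fun _ _ _ hab hbc => hbc.trans hab⟩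
  have : Std.Irrefl r := ⟨fun x => hacyc x⟩
  obtain ⟨⟨v, hv⟩, -, hmin⟩ :=
    (Finite.wellFounded_of_trans_of_irrefl r).has_min Set.univ ⟨⟨_, hS.choose_spec⟩, trivial⟩
  exact ⟨v, hv, fun u hu h => hmin ⟨u, hu⟩ trivial (TransGen.single h)⟩

variable (R) (V : Finset α)

/-- The elements of `V` from which every `R`-path stays in `V` and has fewer than `n` vertices. -/
def heightLT : ℕ → Finset α
  | 0 => ∅
  | n + 1 => V.filter fun v => ∀ u, R v u → u ∈ heightLT n

/-- The number of edges of a longest `R`-path starting at `v` (junk value `0` off `V`). -/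
def height (v : α) : ℕ := sInf {n | v ∈ heightLT R V (n + 1)}

variable {R V}

theorem heightLT_subset : ∀ n, heightLT R V n ⊆ V
  | 0 => Finset.empty_subset V
  | _ + 1 => Finset.filter_subset _ V

theorem heightLT_mono : Monotone (heightLT R V) := by
  refine monotone_nat_of_le_succ fun n => ?_
  induction n with
  | zero => exact Finset.empty_subset _
  | succ n ih =>
    intro v hv
    obtain ⟨hvV, hvsucc⟩ := Finset.mem_filter.1 hv
    exact Finset.mem_filter.2 ⟨hvV, fun u hu => ih (hvsucc u hu)⟩

variable (hsupp : ∀ a b, R a b → b ∈ V) (hacyc : ∀ v, ¬ TransGen R v v)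
include hsupp hacyc

theorem heightLT_ssubset_succ {n : ℕ} (hn : ¬ V ⊆ heightLT R V n) :
    heightLT R V n ⊂ heightLT R V (n + 1) := by
  obtain ⟨w, hw, hwmin⟩ := exists_forall_not_rel_of_acyclic hacyc (Finset.sdiff_nonempty.2 hn)
  rw [Finset.mem_sdiff] at hw
  refine Finset.ssubset_iff_of_subset (heightLT_mono n.le_succ) |>.2 ⟨w, ?_, hw.2⟩
  refine Finset.mem_filter.2 ⟨hw.1, fun u hu => ?_⟩
  by_contra hun
  exact hwmin u (Finset.mem_sdiff.2 ⟨hsupp w u hu, hun⟩) hu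

theorem le_card_heightLT_or_subset (n : ℕ) : n ≤ (heightLT R V n).card ∨ V ⊆ heightLT R V n := by
  induction n with
  | zero => exact Or.inl (Nat.zero_le _)
  | succ n ih =>
    by_cases hV : V ⊆ heightLT R V n
    · exact Or.inr (hV.trans (heightLT_mono n.le_succ))
    · have := ih.resolve_right hV
      have := Finset.card_lt_card (heightLT_ssubset_succ hsupp hacyc hV)
      exact Or.inl (by omega)

theorem mem_heightLT_card_succ {v : α} (hv : v ∈ V) : v ∈ heightLT R V (V.card + 1) := by
  refine (le_card_heightLT_or_subset hsupp hacyc _).resolve_left (fun h => ?_) hv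
  have := Finset.card_le_card (heightLT_subset (R := R) (V := V) (V.card + 1))
  omega

theorem mem_heightLT_height_succ {v : α} (hv : v ∈ V) : v ∈ heightLT R V (height R V v + 1) :=
  Nat.sInf_mem (s := {n | v ∈ heightLT R V (n + 1)}) ⟨_, mem_heightLT_card_succ hsupp hacyc hv⟩

omit hsupp hacyc in
theorem notMem_heightLT_height (v : α) : v ∉ heightLT R V (height R V v) := by
  rcases h : height R V v with _ | n
  · exact Finset.notMem_empty v
  · intro hv
    have : height R V v ≤ n := Nat.sInf_le hv
    omega

theorem height_lt_of_rel {u v : α} (hv : v ∈ V) (h : R v u) : height R V u < height R V v := by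
  have hu : u ∈ heightLT R V (height R V v) :=
    (Finset.mem_filter.1 (mem_heightLT_height_succ hsupp hacyc hv)).2 u h
  by_contra! hle
  exact notMem_heightLT_height u (heightLT_mono hle hu)

theorem exists_rel_height_eq_of_height_eq_succ {v : α} (hv : v ∈ V) {i : ℕ}
    (h : height R V v = i + 1) : ∃ u, R v u ∧ height R V u = i := by
  have hvi : v ∉ heightLT R V (i + 1) := h ▸ notMem_heightLT_height v
  simp only [heightLT, Finset.mem_filter, hv, true_and, not_forall] at hvi
  obtain ⟨u, hu, hui⟩ := hvi
  refine ⟨u, hu, le_antisymm (by have := height_lt_of_rel hsupp hacyc hv hu; omega) ?_⟩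
  by_contra! hlt
  exact hui (heightLT_mono hlt (mem_heightLT_height_succ hsupp hacyc (hsupp v u hu)))

omit hsupp hacyc in
theorem height_eq_zero_of_forall_not_rel {v : α} (hv : v ∈ V) (h : ∀ u, ¬ R v u) :
    height R V v = 0 :=
  Nat.le_zero.1 <| Nat.sInf_le <| Finset.mem_filter.2 ⟨hv, fun u hu => (h u hu).elim⟩

end Relation

namespace WDag

variable {dep : β → β → Prop} (G : WDag β dep)

def edgeHeight : ℕ → ℕ := Relation.height G.Edge G.verts

theorem edgeHeight_lt {u v : ℕ} (h : G.Edge u v) : G.edgeHeight v < G.edgeHeight u :=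
  Relation.height_lt_of_rel (fun _ _ h => (G.support _ _ h).2) G.acyclic (G.support u v h).1 h

theorem dep_of_edge {u v : ℕ} (h : G.Edge u v) : dep (G.label u) (G.label v) := by
  refine (G.edge_iff u (G.support u v h).1 v (G.support u v h).2 ?_).1 (Or.inl h)
  rintro rfl
  exact G.acyclic u (.single h)

def key (v : ℕ) : ℕ ×ₗ ℕ := toLex (G.edgeHeight v, v)

/-- `dep` need not be reflexive, so equally labelled vertices may be non-adjacent; the extra
edges order them by `key`, so that the labels within each level are distinct. Since `key`
puts sinks first, every label of a sink still occurs on level `0`. -/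
def LevelEdge (u v : ℕ) : Prop :=
  G.Edge u v ∨ (u ∈ G.verts ∧ v ∈ G.verts ∧ G.label u = G.label v ∧ G.key v < G.key u)

variable {G}

theorem key_lt_of_levelEdge {u v : ℕ} (h : G.LevelEdge u v) : G.key v < G.key u := by
  rcases h with h | ⟨-, -, -, h⟩
  · exact Prod.Lex.toLex_lt_toLex.2 (Or.inl (G.edgeHeight_lt h))
  · exact h

variable (G)

theorem levelEdge_support {u v : ℕ} (h : G.LevelEdge u v) : u ∈ G.verts ∧ v ∈ G.verts := by
  rcases h with h | ⟨hu, hv, -⟩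
  exacts [G.support u v h, ⟨hu, hv⟩]

theorem levelEdge_acyclic (v : ℕ) : ¬ Relation.TransGen G.LevelEdge v v := by
  intro h
  have := Relation.TransGen.lift (p := (· > ·)) G.key (fun _ _ => key_lt_of_levelEdge) v v h
  rw [Relation.transGen_eq_self] at this
  exact lt_irrefl _ this

def level : ℕ → ℕ := Relation.height G.LevelEdge G.verts

variable {G}

theorem level_lt {u v : ℕ} (h : G.LevelEdge u v) : G.level v < G.level u :=
  Relation.height_lt_of_rel (fun _ _ h => (G.levelEdge_support h).2) G.levelEdge_acyclic
    (G.levelEdge_support h).1 h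

theorem level_lt_of_edge {u v : ℕ} (h : G.Edge u v) : G.level v < G.level u :=
  level_lt (Or.inl h)

variable (G)

def signature (v : ℕ) : ℕ × β := (G.level v, G.label v)

theorem injOn_signature : Set.InjOn G.signature G.verts := by
  intro u hu v hv huv
  simp only [signature, Prod.mk.injEq] at huv
  by_contra hne
  have hkey : G.key u ≠ G.key v := fun h => hne (congrArg (fun x => (ofLex x).2) h)
  rcases hkey.lt_or_gt with h | h
  · exact (level_lt (Or.inr ⟨hv, hu, huv.2.symm, h⟩)).ne huv.1
  · exact (level_lt (Or.inr ⟨hu, hv, huv.2, h⟩)).ne huv.1.symm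

theorem edge_iff_dep_and_level_lt {u v : ℕ} (hu : u ∈ G.verts) (hv : v ∈ G.verts) :
    G.Edge u v ↔ dep (G.label u) (G.label v) ∧ G.level v < G.level u := by
  refine ⟨fun h => ⟨?_, level_lt_of_edge h⟩, fun ⟨hdep, hlt⟩ => ?_⟩
  · exact G.dep_of_edge h
  · rcases (G.edge_iff u hu v hv (by rintro rfl; exact lt_irrefl _ hlt)).2 hdep with h | h
    · exact h
    · exact absurd (level_lt_of_edge h) (lt_asymm hlt)

theorem exists_level_eq_of_level_eq_succ {v : ℕ} (hv : v ∈ G.verts) {i : ℕ}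
    (h : G.level v = i + 1) :
    ∃ u ∈ G.verts, G.level u = i ∧ (G.label v = G.label u ∨ dep (G.label v) (G.label u)) := by
  obtain ⟨u, hvu, hu⟩ := Relation.exists_rel_height_eq_of_height_eq_succ
    (fun _ _ h => (G.levelEdge_support h).2) G.levelEdge_acyclic hv h
  refine ⟨u, (G.levelEdge_support hvu).2, hu, ?_⟩
  rcases hvu with hvu | ⟨-, -, hlabel, -⟩
  · exact Or.inr (G.dep_of_edge hvu)
  · exact Or.inl hlabel

theorem exists_level_eq_of_le {v : ℕ} (hv : v ∈ G.verts) {i : ℕ} (hi : i ≤ G.level v) :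
    ∃ u ∈ G.verts, G.level u = i := by
  induction h : G.level v generalizing v with
  | zero => exact ⟨v, hv, by omega⟩
  | succ n ih =>
    rcases hi.eq_or_lt with hi | hi
    · exact ⟨v, hv, hi.symm⟩
    obtain ⟨u, hu, hun, -⟩ := G.exists_level_eq_of_level_eq_succ hv h
    exact ih hu (by omega) hun

def layer (i : ℕ) : Finset β := (G.verts.filter fun v => G.level v = i).image G.label

variable {G}

theorem mem_layer {i : ℕ} {A : β} :
    A ∈ G.layer i ↔ ∃ v ∈ G.verts, G.level v = i ∧ G.label v = A := by
  simp [layer, and_assoc]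

theorem exists_level_eq_zero_of_forall_not_edge {s : ℕ} (hs : s ∈ G.verts)
    (hsink : ∀ w, ¬ G.Edge s w) : ∃ m ∈ G.verts, G.level m = 0 ∧ G.label m = G.label s := by
  have hs' : s ∈ G.verts.filter fun v => G.label v = G.label s := Finset.mem_filter.2 ⟨hs, rfl⟩
  obtain ⟨m, hm, hmin⟩ := Finset.exists_min_image _ G.key ⟨s, hs'⟩
  rw [Finset.mem_filter] at hm
  have hs0 : G.edgeHeight s = 0 := Relation.height_eq_zero_of_forall_not_rel hs hsink
  have hm0 : G.edgeHeight m = 0 :=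
    Nat.le_zero.1 (hs0 ▸ Prod.Lex.monotone_fst _ _ (hmin s hs'))
  refine ⟨m, hm.1, Relation.height_eq_zero_of_forall_not_rel hm.1 fun w hw => ?_, hm.2⟩
  rcases hw with hw | ⟨-, hw, hlabel, hlt⟩
  · exact absurd (G.edgeHeight_lt hw) (by omega)
  · exact (hmin w (Finset.mem_filter.2 ⟨hw, hlabel ▸ hm.2⟩)).not_gt hlt

variable (G)

theorem layer_zero : G.layer 0 = G.sinkSet := by
  ext A
  simp only [mem_layer, sinkSet, Finset.mem_image, Finset.mem_filter, and_assoc]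
  constructor
  · rintro ⟨v, hv, hv0, rfl⟩
    exact ⟨v, hv, fun w hw => absurd (level_lt_of_edge hw) (by omega), rfl⟩
  · rintro ⟨s, hs, hsink, rfl⟩
    exact exists_level_eq_zero_of_forall_not_edge hs hsink

theorem isStable_layer (i : ℕ) : IsStable dep (G.layer i) := by
  rintro A hA B hB hAB hdep
  obtain ⟨u, hu, rfl, rfl⟩ := mem_layer.1 hA
  obtain ⟨v, hv, hvu, rfl⟩ := mem_layer.1 hB
  rcases (G.edge_iff u hu v hv (by rintro rfl; exact hAB rfl)).2 hdep with h | h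
  · exact (level_lt_of_edge h).ne hvu
  · exact (level_lt_of_edge h).ne hvu.symm

theorem layer_succ_mem_stab [Fintype β] (i : ℕ) : G.layer (i + 1) ∈ stab dep (G.layer i) := by
  refine Finset.mem_filter.2 ⟨Finset.mem_univ _, G.isStable_layer _, fun A hA => ?_⟩
  obtain ⟨v, hv, hvi, rfl⟩ := mem_layer.1 hA
  obtain ⟨u, hu, hui, hvu⟩ := G.exists_level_eq_of_level_eq_succ hv hvi
  exact Finset.mem_biUnion.2
    ⟨G.label u, mem_layer.2 ⟨u, hu, hui, rfl⟩, Finset.mem_filter.2 ⟨Finset.mem_univ _, hvu⟩⟩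

theorem layer_eq_empty_iff {i : ℕ} : G.layer i = ∅ ↔ ∀ v ∈ G.verts, G.level v < i := by
  refine ⟨fun h v hv => ?_, fun h => Finset.eq_empty_of_forall_notMem fun A hA => ?_⟩
  · by_contra! hi
    obtain ⟨u, hu, hui⟩ := G.exists_level_eq_of_le hv hi
    exact Finset.notMem_empty _ (h ▸ mem_layer.2 ⟨u, hu, hui, rfl⟩)
  · obtain ⟨v, hv, rfl, -⟩ := mem_layer.1 hA
    exact lt_irrefl _ (h v hv)

def toStableSeq [Fintype β] {J : Finset β} (hJ : G.sinkSet = J) : StableSeq dep J where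
  seq := G.layer
  root := G.layer_zero.trans hJ
  stable := G.isStable_layer
  step := G.layer_succ_mem_stab
  fin := ⟨G.verts.sup G.level + 1, G.layer_eq_empty_iff.2 fun _ hv =>
    Nat.lt_succ_of_le (Finset.le_sup hv)⟩

theorem weight_toStableSeq [Fintype β] {J : Finset β} (hJ : G.sinkSet = J) (q : β → ℝ≥0∞) :
    (G.toStableSeq hJ).weight q = G.wt q := by
  have hlt : ∀ v ∈ G.verts, G.level v ∈ Finset.range (G.toStableSeq hJ).depth := fun v hv =>
    Finset.mem_range.2 (G.layer_eq_empty_iff.1 (Nat.find_spec (G.toStableSeq hJ).fin) v hv)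
  rw [StableSeq.weight, wt, ← Finset.prod_fiberwise_of_maps_to hlt]
  refine Finset.prod_congr rfl fun i _ => Finset.prod_image fun u hu v hv huv => ?_
  rw [Finset.mem_coe, Finset.mem_filter] at hu hv
  exact G.injOn_signature hu.1 hv.1 (Prod.ext (hu.2.trans hv.2.symm) huv)

theorem iso_of_image_signature_eq {H : WDag β dep}
    (h : G.verts.image G.signature = H.verts.image H.signature) : G.Iso H := by
  have hG := G.injOn_signature.bijOn_image
  have hH := H.injOn_signature.bijOn_image
  rw [← Finset.coe_image, h, Finset.coe_image] at hG
  set e := Function.invFunOn H.signature H.verts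
  have hsig : ∀ v ∈ G.verts, H.signature (e (G.signature v)) = G.signature v :=
    fun v hv => hH.invOn_invFunOn.2 (hG.mapsTo hv)
  have hlevel : ∀ v ∈ G.verts, H.level (e (G.signature v)) = G.level v :=
    fun v hv => congrArg Prod.fst (hsig v hv)
  have hlabel : ∀ v ∈ G.verts, H.label (e (G.signature v)) = G.label v :=
    fun v hv => congrArg Prod.snd (hsig v hv)
  have he : Set.BijOn (e ∘ G.signature) G.verts H.verts :=
    (hH.symm hH.invOn_invFunOn.symm).comp hG
  refine ⟨e ∘ G.signature, he, hlabel, fun u hu v hv => ?_⟩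
  rw [G.edge_iff_dep_and_level_lt hu hv, H.edge_iff_dep_and_level_lt (he.mapsTo hu) (he.mapsTo hv)]
  rw [Function.comp_apply, Function.comp_apply, hlevel u hu, hlevel v hv, hlabel u hu, hlabel v hv]

theorem iso_of_layer_eq {H : WDag β dep} (h : G.layer = H.layer) : G.Iso H := by
  refine G.iso_of_image_signature_eq (Finset.ext fun ⟨i, A⟩ => ?_)
  have := congrArg (A ∈ · i) h
  simpa [mem_layer, signature, and_assoc] using this

end WDag

theorem WDag.wt_rpow {dep : β → β → Prop} (G : WDag β dep) (p : β → ℝ≥0∞) {r : ℝ}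
    (hr : 0 ≤ r) : G.wt (fun B => p B ^ r) = G.wt p ^ r :=
  by rw [WDag.wt, WDag.wt, ENNReal.prod_rpow_of_nonneg hr]

/-- Since `x ≤ x ^ (1 - ε) < τ`, the missing factor `x ^ ε` is at most `τ ^ ε`. -/
theorem ENNReal.le_ofReal_rpow_mul_rpow_of_rpow_lt {x : ℝ≥0∞} {ε τ : ℝ} (hε : 0 ≤ ε)
    (hε1 : ε < 1) (hτ : τ ≤ 1) (hx : x ^ (1 - ε) < ENNReal.ofReal τ) :
    x ≤ ENNReal.ofReal (τ ^ ε) * x ^ (1 - ε) := by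
  have hτ0 : 0 ≤ τ := by
    by_contra! h
    simp [ENNReal.ofReal_of_nonpos h.le] at hx
  have hx1 : x ≤ 1 := by
    by_contra! h
    exact (ENNReal.one_le_rpow h.le (by linarith)).not_gt
      (hx.trans_le (ENNReal.ofReal_le_one.2 hτ))
  have hxτ : x ≤ ENNReal.ofReal τ := calc
    x = x ^ (1 : ℝ) := (ENNReal.rpow_one x).symm
    _ ≤ x ^ (1 - ε) := ENNReal.rpow_le_rpow_of_exponent_ge hx1 (by linarith)
    _ ≤ ENNReal.ofReal τ := hx.le
  calc x = x ^ ε * x ^ (1 - ε) := by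
        rw [← ENNReal.rpow_add_of_nonneg _ _ hε (by linarith), add_sub_cancel, ENNReal.rpow_one]
    _ ≤ ENNReal.ofReal τ ^ ε * x ^ (1 - ε) := by gcongr
    _ = ENNReal.ofReal (τ ^ ε) * x ^ (1 - ε) := by rw [ENNReal.ofReal_rpow_of_nonneg hτ0 hε]

theorem wt_le_of_memF1 [Fintype β] {dep : β → β → Prop} {p : β → ℝ≥0∞} {ε τ : ℝ}
    {G : WDag β dep} (hG : memF1 dep p ε τ G) (hε : 0 ≤ ε) (hε1 : ε < 1) (hτ : τ ≤ 1) :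
    G.wt p ≤ ENNReal.ofReal (τ ^ ε) * G.wt (fun B => p B ^ ((1 : ℝ) - ε)) := by
  have hwt := hG.2.1
  rw [G.wt_rpow p (by linarith)] at hwt ⊢
  exact ENNReal.le_ofReal_rpow_mul_rpow_of_rpow_lt hε hε1 hτ hwt

theorem sum_wt_le_mu [Fintype β] {dep : β → β → Prop} {J : Finset β} {s : Finset (WDag β dep)}
    (hsink : ∀ G ∈ s, G.sinkSet = J)
    (hdist : (s : Set (WDag β dep)).Pairwise fun G H => ¬ G.Iso H) (q : β → ℝ≥0∞) :
    ∑ G ∈ s, G.wt q ≤ mu dep q J := by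
  let m : s → StableSeq dep J := fun G => G.1.toStableSeq (hsink G.1 G.2)
  have hm : Function.Injective m := fun G H hGH => Subtype.ext <| by
    by_contra hne
    exact hdist G.2 H.2 hne (G.1.iso_of_layer_eq (congrArg StableSeq.seq hGH))
  calc ∑ G ∈ s, G.wt q = ∑' G : s, (m G).weight q := by
        rw [tsum_fintype, ← Finset.sum_coe_sort s]
        simp only [m, WDag.weight_toStableSeq]
    _ ≤ mu dep q J := ENNReal.tsum_comp_le_tsum_of_injective hm _

theorem sum_wt_le_sum_alphaB [Fintype β] {dep : β → β → Prop} {𝒢 : Finset (WDag β dep)}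
    (hcoll : ∀ G ∈ 𝒢, G.Collectible)
    (hdist : (𝒢 : Set (WDag β dep)).Pairwise fun G H => ¬ G.Iso H) (q : β → ℝ≥0∞) :
    ∑ G ∈ 𝒢, G.wt q ≤ ∑ B : β, alphaB dep q B := by
  have hfiber (B : β) : ∑ G ∈ 𝒢 with G.sinkSet ∈ stab dep {B}, G.wt q ≤ alphaB dep q B := by
    rw [alphaB, ← Finset.sum_fiberwise_of_maps_to (g := WDag.sinkSet)
      fun G hG => (Finset.mem_filter.1 hG).2]
    refine Finset.sum_le_sum fun J _ => sum_wt_le_mu (fun G hG => (Finset.mem_filter.1 hG).2)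
      (hdist.mono ?_) q
    exact Finset.coe_subset.2 ((Finset.filter_subset _ _).trans (Finset.filter_subset _ _))
  calc ∑ G ∈ 𝒢, G.wt q
      ≤ ∑ G ∈ 𝒢, ∑ B : β, if G.sinkSet ∈ stab dep {B} then G.wt q else 0 := by
        refine Finset.sum_le_sum fun G hG => ?_
        obtain ⟨B, hB⟩ := hcoll G hG
        calc G.wt q = if G.sinkSet ∈ stab dep {B} then G.wt q else 0 := (if_pos hB).symm
          _ ≤ _ := Finset.single_le_sum (f := fun B => if G.sinkSet ∈ stab dep {B} then G.wt q else 0)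
            (fun _ _ => zero_le) (Finset.mem_univ B)
    _ = ∑ B : β, ∑ G ∈ 𝒢 with G.sinkSet ∈ stab dep {B}, G.wt q := by
        rw [Finset.sum_comm]
        simp only [Finset.sum_filter]
    _ ≤ ∑ B : β, alphaB dep q B := Finset.sum_le_sum fun B _ => hfiber B

theorem F1_weight_bound_general [Fintype β] (dep : β → β → Prop)
    (p : β → ℝ≥0∞) (ε τ : ℝ)
    (hε : 0 < ε ∧ ε < 1 / 2) (hτ : 0 < τ ∧ τ < 1 / 2)
    (𝒢 : Finset (WDag β dep)) (h𝒢 : ∀ G ∈ 𝒢, memF1 dep p ε τ G)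
    (hdist : ∀ G ∈ 𝒢, ∀ H ∈ 𝒢, G ≠ H → ¬ G.Iso H) :
    ∑ G ∈ 𝒢, G.wt p ≤
      ENNReal.ofReal (τ ^ ε) *
        ∑ B : β, alphaB dep (fun A => p A ^ ((1 : ℝ) - ε)) B := by
  calc ∑ G ∈ 𝒢, G.wt p
      ≤ ∑ G ∈ 𝒢, ENNReal.ofReal (τ ^ ε) * G.wt (fun A => p A ^ ((1 : ℝ) - ε)) :=
        Finset.sum_le_sum fun G hG =>
          wt_le_of_memF1 (h𝒢 G hG) hε.1.le (by linarith) (by linarith)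
    _ = ENNReal.ofReal (τ ^ ε) * ∑ G ∈ 𝒢, G.wt (fun A => p A ^ ((1 : ℝ) - ε)) :=
        (Finset.mul_sum _ _ _).symm
    _ ≤ _ := by
        gcongr
        exact sum_wt_le_sum_alphaB (fun G hG => (h𝒢 G hG).1) (fun G hG H hH => hdist G hG H hH) _

/-- w(𝔉¹_τ) ≤ τ^ε · W_ε, where W_ε = Σ_B α_{p^{1-ε}}(B):
any finite collection of pairwise non-isomorphic wdags in 𝔉¹_τ has total
(unadjusted) weight at most τ^ε · W_ε. -/
theorem F1_weight_bound [Fintype β] (dep : β → β → Prop) (hsym : Symmetric dep)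
    (p : β → ℝ≥0∞) (hp : ∀ B, p B ≤ 1) (ε τ : ℝ)
    (hε : 0 < ε ∧ ε < 1 / 2) (hτ : 0 < τ ∧ τ < 1 / 2)
    (𝒢 : Finset (WDag β dep)) (h𝒢 : ∀ G ∈ 𝒢, memF1 dep p ε τ G)
    (hdist : ∀ G ∈ 𝒢, ∀ H ∈ 𝒢, G ≠ H → ¬ G.Iso H) :
    ∑ G ∈ 𝒢, G.wt p ≤
      ENNReal.ofReal (τ ^ ε) *
        ∑ B : β, alphaB dep (fun A => p A ^ ((1 : ℝ) - ε)) B :=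
  F1_weight_bound_general dep p ε τ hε hτ 𝒢 h𝒢 hdist
end
end

section
/- In the cluster-expansion analysis of independent transversals with block-size b and maximum degree Δ = b/4: there exists ε > 0 (depending only on b) and t > 0 such that t ≥ (1/b²)^{1−ε} · ( t + (1 + (bΔ − 1)t)² ), certifying the cluster-expansion LLL criterion with ε-exponential slack for the edge bad-events of probability 1/b². -/
/-- in the cluster-expansion analysis of independent transversals
with block-size b and maximum degree Δ = b/4, there exist ε > 0 (depending only
on b) and t > 0 with t ≥ (1/b²)^{1-ε} · ( t + (1 + (bΔ - 1)t)² ), certifying the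
cluster-expansion LLL criterion with ε-exponential slack for the edge bad-events
of probability 1/b². -/
theorem cluster_expansion_slack_for_IT (b : ℝ) (hb : 4 ≤ b) :
    ∃ ε t : ℝ, 0 < ε ∧ 0 < t ∧
      ((1 / b ^ 2) ^ ((1 : ℝ) - ε)) * (t + (1 + (b * (b / 4) - 1) * t) ^ 2) ≤ t := by
  have hbpos : (0 : ℝ) < b := by linarith
  have hb2pos : (0 : ℝ) < b ^ 2 := by positivity
  have hb2 : (1 : ℝ) < b ^ 2 := by nlinarith
  set t : ℝ := 4 / b ^ 2 with ht_def
  have ht : 0 < t := by positivity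
  have htle : t ≤ 1 := by
    rw [ht_def, div_le_one hb2pos]; nlinarith
  set u : ℝ := b * (b / 4) - 1 with hu_def
  set S : ℝ := t + (1 + u * t) ^ 2 with hS_def
  have hut : u * t = 1 - t := by
    rw [hu_def, ht_def]; field_simp
  have hSval : S = 4 - 3 * t + t ^ 2 := by
    rw [hS_def, hut]; ring
  have hSpos : 0 < S := by
    rw [hS_def]; nlinarith [sq_nonneg (1 + u * t)]
  have hS4 : S < 4 := by nlinarith
  have h1 : (1 : ℝ) < 4 / S := (one_lt_div hSpos).2 hS4
  have hL : 0 < Real.log (b ^ 2) := Real.log_pos hb2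
  have hL2 : 0 < Real.log (4 / S) := Real.log_pos h1
  refine ⟨Real.log (4 / S) / Real.log (b ^ 2), t, div_pos hL2 hL, ht, ?_⟩
  have hεL : Real.log (4 / S) / Real.log (b ^ 2) * Real.log (b ^ 2)
      = Real.log (4 / S) := div_mul_cancel₀ _ (ne_of_gt hL)
  have key : ((1 / b ^ 2 : ℝ)) ^ ((1 : ℝ) - Real.log (4 / S) / Real.log (b ^ 2))
      = (4 / S) / b ^ 2 := by
    rw [Real.rpow_def_of_pos (by positivity)]
    rw [show Real.log (1 / b ^ 2) = - Real.log (b ^ 2) by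
      rw [one_div, Real.log_inv]]
    rw [show -Real.log (b ^ 2) * (1 - Real.log (4 / S) / Real.log (b ^ 2))
        = Real.log (4 / S) / Real.log (b ^ 2) * Real.log (b ^ 2)
          - Real.log (b ^ 2) by ring]
    rw [hεL, Real.exp_sub, Real.exp_log (by positivity), Real.exp_log hb2pos]
  rw [key]
  have : 4 / S / b ^ 2 * S = 4 / b ^ 2 := by
    field_simp
  rw [this]
end
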